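/- Let p₁, p₂ ∈ (0,1) be real numbers and define d : ℝ → ℝ by d(x) = −x·ln x − (p₁−x)·ln(p₁−x) − (p₂−x)·ln(p₂−x) − (1−p₁−p₂+x)·ln(1−p₁−p₂+x). Then for every x in the open interval (max(0, p₁+p₂−1), min(p₁, p₂)) with x ≠ p₁·p₂, we have d(x) < d(p₁·p₂). In other words, x = p₁·p₂ is the unique maximizer of d on this interval. -/

import Mathlib

/-!
`d x` is the entropy of the joint law `q = (x, p₁ - x, p₂ - x, 1 - p₁ - p₂ + x)` of the
indicators of `A` and `B`, and `d (p₁ * p₂)` is the entropy of the product `r` of its marginals.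
Their difference is the Kullback–Leibler divergence `∑ qᵢ log (qᵢ / rᵢ)`, which is positive for
`q ≠ r` by the termwise Gibbs inequality `qᵢ log (qᵢ / rᵢ) ≥ qᵢ - rᵢ` (strict when `qᵢ ≠ rᵢ`),
since `∑ qᵢ = ∑ rᵢ`.
-/

open Real

lemma sub_lt_mul_log_div {q r : ℝ} (hq : 0 < q) (hr : 0 < r) (hne : q ≠ r) :
    q - r < q * log (q / r) := by
  have hlog : log (r / q) < r / q - 1 :=
    log_lt_sub_one_of_pos (div_pos hr hq) (by rwa [ne_eq, div_eq_one_iff_eq hq.ne', eq_comm])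
  have hscaled : q * log (r / q) < r - q := by
    calc q * log (r / q) < q * (r / q - 1) := mul_lt_mul_of_pos_left hlog hq
      _ = r - q := by field_simp
  rw [← inv_div, log_inv]
  linarith

lemma sub_le_mul_log_div {q r : ℝ} (hq : 0 < q) (hr : 0 < r) :
    q - r ≤ q * log (q / r) := by
  rcases eq_or_ne q r with rfl | hne
  · simp [div_self hq.ne']
  · exact (sub_lt_mul_log_div hq hr hne).le

noncomputable def jointEntropy (p₁ p₂ x : ℝ) : ℝ :=
  -x * log x - (p₁ - x) * log (p₁ - x) - (p₂ - x) * log (p₂ - x)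
    - (1 - p₁ - p₂ + x) * log (1 - p₁ - p₂ + x)

lemma jointEntropy_mul_sub_jointEntropy {p₁ p₂ x : ℝ} (hx : 0 < x) (hx₁ : x < p₁)
    (hx₂ : x < p₂) (hx₁₂ : 0 < 1 - p₁ - p₂ + x) :
    jointEntropy p₁ p₂ (p₁ * p₂) - jointEntropy p₁ p₂ x =
      x * log (x / (p₁ * p₂)) + (p₁ - x) * log ((p₁ - x) / (p₁ * (1 - p₂)))
        + (p₂ - x) * log ((p₂ - x) / ((1 - p₁) * p₂))
        + (1 - p₁ - p₂ + x) * log ((1 - p₁ - p₂ + x) / ((1 - p₁) * (1 - p₂))) := by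
  have hp₁ : p₁ ≠ 0 := by linarith
  have hp₂ : p₂ ≠ 0 := by linarith
  have hq₁ : 1 - p₁ ≠ 0 := by linarith
  have hq₂ : 1 - p₂ ≠ 0 := by linarith
  have h₁ : p₁ - p₁ * p₂ = p₁ * (1 - p₂) := by ring
  have h₂ : p₂ - p₁ * p₂ = (1 - p₁) * p₂ := by ring
  have h₁₂ : 1 - p₁ - p₂ + p₁ * p₂ = (1 - p₁) * (1 - p₂) := by ring
  unfold jointEntropy
  rw [h₁, h₂, h₁₂, log_div hx.ne' (mul_ne_zero hp₁ hp₂),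
    log_div (sub_ne_zero.2 hx₁.ne') (mul_ne_zero hp₁ hq₂),
    log_div (sub_ne_zero.2 hx₂.ne') (mul_ne_zero hq₁ hp₂),
    log_div hx₁₂.ne' (mul_ne_zero hq₁ hq₂),
    log_mul hp₁ hp₂, log_mul hp₁ hq₂, log_mul hq₁ hp₂, log_mul hq₁ hq₂]
  ring

theorem unique_maximizer_of_relative_divergence_general
    (p₁ p₂ : ℝ)
    (d : ℝ → ℝ)
    (hd : ∀ x, d x =
      -x * Real.log x - (p₁ - x) * Real.log (p₁ - x)
        - (p₂ - x) * Real.log (p₂ - x)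
        - (1 - p₁ - p₂ + x) * Real.log (1 - p₁ - p₂ + x)) :
    ∀ x ∈ Set.Ioo (max 0 (p₁ + p₂ - 1)) (min p₁ p₂),
      x ≠ p₁ * p₂ → d x < d (p₁ * p₂) := by
  rintro x ⟨hlo, hhi⟩ hne
  obtain ⟨hx, hx₁₂⟩ := max_lt_iff.1 hlo
  obtain ⟨hx₁, hx₂⟩ := lt_min_iff.1 hhi
  replace hx₁₂ : 0 < 1 - p₁ - p₂ + x := by linarith
  have hkl := jointEntropy_mul_sub_jointEntropy hx hx₁ hx₂ hx₁₂
  simp only [jointEntropy, ← hd] at hkl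
  have hp₁ : 0 < p₁ := by linarith
  have hp₂ : 0 < p₂ := by linarith
  have hq₁ : 0 < 1 - p₁ := by linarith
  have hq₂ : 0 < 1 - p₂ := by linarith
  linarith [sub_lt_mul_log_div hx (mul_pos hp₁ hp₂) hne,
    sub_le_mul_log_div (sub_pos.2 hx₁) (mul_pos hp₁ hq₂),
    sub_le_mul_log_div (sub_pos.2 hx₂) (mul_pos hq₁ hp₂),
    sub_le_mul_log_div hx₁₂ (mul_pos hq₁ hq₂)]

/-- For `p₁, p₂ ∈ (0,1)`, the relative divergence
`d(x) = −x ln x − (p₁−x) ln(p₁−x) − (p₂−x) ln(p₂−x) − (1−p₁−p₂+x) ln(1−p₁−p₂+x)`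
attains its unique maximum on the open interval `(max(0, p₁+p₂−1), min(p₁, p₂))`
at `x = p₁ p₂`. -/
theorem unique_maximizer_of_relative_divergence
    (p₁ p₂ : ℝ) (hp₁ : p₁ ∈ Set.Ioo (0 : ℝ) 1) (hp₂ : p₂ ∈ Set.Ioo (0 : ℝ) 1)
    (d : ℝ → ℝ)
    (hd : ∀ x, d x =
      -x * Real.log x - (p₁ - x) * Real.log (p₁ - x)
        - (p₂ - x) * Real.log (p₂ - x)
        - (1 - p₁ - p₂ + x) * Real.log (1 - p₁ - p₂ + x)) :
    ∀ x ∈ Set.Ioo (max 0 (p₁ + p₂ - 1)) (min p₁ p₂),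
      x ≠ p₁ * p₂ → d x < d (p₁ * p₂) :=
  unique_maximizer_of_relative_divergence_general p₁ p₂ d hd
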